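/- arXiv:2410.07534 — 2 statements merged into one kernel-verified Lean document; each statement's English description precedes it below -/
import Mathlib

section
/- Define S_α(s,u) = ∑_{n=0}^∞ (1/(n+α+1)) ∑_{k=0}^n (-1)^k C(n,k) (k+u)^(1-s) for real u > 0, complex s with Re(s) > 2, and real α > 0. Then α * S_α(s,u) = S_{α-1}(s-1,u) + (α-u) * S_{α-1}(s,u). -/
/-- `S_α(s,u) = ∑_{n≥0} 1/(n+α+1) ∑_{k=0}^n (-1)^k C(n,k) (k+u)^{1-s}`. -/
noncomputable def Salpha (α : ℝ) (s : ℂ) (u : ℝ) : ℂ :=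
  ∑' n : ℕ, (1 / ((n : ℂ) + (α : ℂ) + 1)) * ∑ k ∈ Finset.range (n + 1),
    (-1 : ℂ) ^ k * (n.choose k : ℂ) * ((k + u : ℝ) : ℂ) ^ (1 - s)

/-!
Write `a_n(z) = ∑_{k ≤ n} (-1)^k C(n,k) (k+u)^{1-z}`. Since `(k+u)^{2-z} = (k+u) (k+u)^{1-z}` and
`(n-k) C(n,k) = n C(n-1,k)`, one has `a_n(z-1) = (n+u) a_n(z) - n a_{n-1}(z)`. This makes the `n`-th
term of `S_{α-1}(s-1,u) + (α-u) S_{α-1}(s,u) - α S_α(s,u)` equal to `B_{n+1} - B_n` with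
`B_n = n/(n+α) a_{n-1}(s)`, so the series telescopes to `lim B_n = 0`.

The analysis rests on the Mellin representation
`Γ(z-1) a_n(z) = ∫_0^∞ t^{z-2} e^{-ut} (1-e^{-t})^n dt`: it gives `a_n(z) → 0` by dominated
convergence, and `∑ ‖a_n(z)‖/(n+1) < ∞` because `∑_n x^n/(n+1) = -log(1-x)/x ≤ 1+t` for
`x = 1-e^{-t}`.
-/

open MeasureTheory Set Filter Topology Finset

section ExpBinomIntegral

variable {u p : ℝ}

lemma integrableOn_rpow_mul_exp_neg_mul (hp : -1 < p) (hu : 0 < u) :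
    IntegrableOn (fun t : ℝ => t ^ p * Real.exp (-u * t)) (Ioi 0) := by
  simpa using integrableOn_rpow_mul_exp_neg_mul_rpow hp zero_lt_one hu

lemma one_sub_exp_neg_nonneg {t : ℝ} (ht : 0 ≤ t) : 0 ≤ 1 - Real.exp (-t) := by
  simpa using Real.exp_le_one_iff.mpr (neg_nonpos.mpr ht)

lemma one_sub_exp_neg_lt_one (t : ℝ) : 1 - Real.exp (-t) < 1 := by
  linarith [Real.exp_pos (-t)]

noncomputable def expBinomIntegral (u p : ℝ) (n : ℕ) : ℝ :=
  ∫ t in Ioi (0 : ℝ), t ^ p * Real.exp (-u * t) * (1 - Real.exp (-t)) ^ n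

lemma norm_rpow_mul_exp_mul_one_sub_exp_pow_le {t : ℝ} (ht : 0 < t) (n : ℕ) :
    ‖t ^ p * Real.exp (-u * t) * (1 - Real.exp (-t)) ^ n‖ ≤ t ^ p * Real.exp (-u * t) := by
  have h0 := one_sub_exp_neg_nonneg ht.le
  rw [Real.norm_of_nonneg (by positivity)]
  exact mul_le_of_le_one_right (by positivity) (pow_le_one₀ h0 (one_sub_exp_neg_lt_one t).le)

lemma aestronglyMeasurable_rpow_mul_exp_mul_one_sub_exp_pow (n : ℕ) :
    AEStronglyMeasurable (fun t : ℝ => t ^ p * Real.exp (-u * t) * (1 - Real.exp (-t)) ^ n)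
      (volume.restrict (Ioi 0)) :=
  (by fun_prop : Measurable _).aestronglyMeasurable

lemma integrableOn_rpow_mul_exp_mul_one_sub_exp_pow (hp : -1 < p) (hu : 0 < u) (n : ℕ) :
    IntegrableOn (fun t : ℝ => t ^ p * Real.exp (-u * t) * (1 - Real.exp (-t)) ^ n) (Ioi 0) :=
  (integrableOn_rpow_mul_exp_neg_mul hp hu).mono'
    (aestronglyMeasurable_rpow_mul_exp_mul_one_sub_exp_pow n)
    ((ae_restrict_mem measurableSet_Ioi).mono fun _ ht =>
      norm_rpow_mul_exp_mul_one_sub_exp_pow_le ht n)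

lemma expBinomIntegral_nonneg (n : ℕ) : 0 ≤ expBinomIntegral u p n :=
  setIntegral_nonneg measurableSet_Ioi fun t (ht : 0 < t) => by
    have := one_sub_exp_neg_nonneg ht.le
    positivity

lemma tendsto_expBinomIntegral_atTop (hp : -1 < p) (hu : 0 < u) :
    Tendsto (expBinomIntegral u p) atTop (𝓝 0) := by
  have hlim : ∀ t ∈ Ioi (0 : ℝ), Tendsto
      (fun n : ℕ => t ^ p * Real.exp (-u * t) * (1 - Real.exp (-t)) ^ n) atTop (𝓝 0) :=
    fun t (ht : 0 < t) => by
      simpa using (tendsto_pow_atTop_nhds_zero_of_lt_one (one_sub_exp_neg_nonneg ht.le)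
        (one_sub_exp_neg_lt_one t)).const_mul (t ^ p * Real.exp (-u * t))
  rw [← integral_zero ℝ ℝ]
  exact tendsto_integral_of_dominated_convergence _
    (fun n => aestronglyMeasurable_rpow_mul_exp_mul_one_sub_exp_pow n)
    (integrableOn_rpow_mul_exp_neg_mul hp hu)
    (fun n => (ae_restrict_mem measurableSet_Ioi).mono fun _ ht =>
      norm_rpow_mul_exp_mul_one_sub_exp_pow_le ht n)
    ((ae_restrict_mem measurableSet_Ioi).mono hlim)

lemma sum_range_pow_div_succ_le {t : ℝ} (ht : 0 < t) (N : ℕ) :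
    ∑ n ∈ range N, (1 - Real.exp (-t)) ^ n / (n + 1) ≤ 1 + t := by
  set x := 1 - Real.exp (-t)
  have hx0 : 0 < x := by simpa [x] using Real.exp_lt_one_iff.mpr (neg_lt_zero.mpr ht)
  have hx1 : x < 1 := by linarith [Real.exp_pos (-t)]
  have hlog : HasSum (fun n : ℕ => x ^ (n + 1) / (n + 1)) t := by
    have h := Real.hasSum_pow_div_log_of_abs_lt_one (x := x) (by rwa [abs_of_pos hx0])
    rwa [sub_sub_cancel, Real.log_exp, neg_neg] at h
  -- `t ≤ (1 + t) x` is `1 + t ≤ exp t`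
  have hpartial : x * ∑ n ∈ range N, x ^ n / (n + 1) ≤ (1 + t) * x := calc
    x * ∑ n ∈ range N, x ^ n / (n + 1) = ∑ n ∈ range N, x ^ (n + 1) / (n + 1) := by
      rw [mul_sum]; exact sum_congr rfl fun n _ => by ring
    _ ≤ t := hlog.summable.sum_le_tsum _ (fun n _ => by positivity) |>.trans hlog.tsum_eq.le
    _ ≤ (1 + t) * x := by
      have := Real.add_one_le_exp t
      have : Real.exp (-t) * Real.exp t = 1 := by rw [← Real.exp_add]; simp
      nlinarith [Real.exp_pos (-t)]
  exact le_of_mul_le_mul_left (by linarith) hx0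

lemma summable_expBinomIntegral_div_succ (hp : -1 < p) (hu : 0 < u) :
    Summable fun n : ℕ => expBinomIntegral u p n / (n + 1) := by
  have hint (n : ℕ) := integrableOn_rpow_mul_exp_mul_one_sub_exp_pow hp hu n
  have hdom : IntegrableOn (fun t : ℝ => t ^ p * Real.exp (-u * t) * (1 + t)) (Ioi 0) := by
    refine ((integrableOn_rpow_mul_exp_neg_mul hp hu).add
      (integrableOn_rpow_mul_exp_neg_mul (p := p + 1) (by linarith) hu)).congr_fun
      (fun t (ht : 0 < t) => ?_) measurableSet_Ioi
    simp only [Pi.add_apply, Real.rpow_add ht, Real.rpow_one]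
    ring
  refine summable_of_sum_range_le (c := ∫ t in Ioi 0, t ^ p * Real.exp (-u * t) * (1 + t))
    (fun n => div_nonneg (expBinomIntegral_nonneg n) (by positivity))
    fun N => ?_
  calc ∑ n ∈ range N, expBinomIntegral u p n / (n + 1)
      = ∫ t in Ioi 0, ∑ n ∈ range N,
          t ^ p * Real.exp (-u * t) * (1 - Real.exp (-t)) ^ n / (n + 1) := by
        rw [integral_finsetSum _ fun n _ => (hint n).div_const _]
        simp only [expBinomIntegral, integral_div]
    _ ≤ ∫ t in Ioi 0, t ^ p * Real.exp (-u * t) * (1 + t) :=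
        setIntegral_mono_on (integrable_finsetSum _ fun n _ => (hint n).div_const _) hdom
          measurableSet_Ioi fun t (ht : 0 < t) => by
            simp_rw [mul_div_assoc, ← mul_sum]
            exact mul_le_mul_of_nonneg_left (sum_range_pow_div_succ_le ht N) (by positivity)

end ExpBinomIntegral

lemma exp_mul_one_sub_exp_pow_eq_sum (u t : ℝ) (n : ℕ) :
    Real.exp (-u * t) * (1 - Real.exp (-t)) ^ n =
      ∑ k ∈ range (n + 1), (-1) ^ k * (n.choose k : ℝ) * Real.exp (-(k + u) * t) := by
  rw [sub_eq_neg_add, add_pow, mul_sum]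
  refine sum_congr rfl fun k _ => ?_
  rw [neg_pow, one_pow, mul_one, ← Real.exp_nat_mul,
    show -(k + u) * t = -u * t + k * -t by ring, Real.exp_add]
  ring

noncomputable def altBinomSum (u : ℝ) (z : ℂ) (n : ℕ) : ℂ :=
  ∑ k ∈ range (n + 1), (-1 : ℂ) ^ k * (n.choose k : ℂ) * ((k + u : ℝ) : ℂ) ^ (1 - z)

section AltBinomSum

variable {u : ℝ}

lemma Gamma_mul_altBinomSum (hu : 0 < u) {z : ℂ} (hz : 1 < z.re) (n : ℕ) :
    Complex.Gamma (z - 1) * altBinomSum u z n =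
      mellin (fun t : ℝ => ((Real.exp (-u * t) * (1 - Real.exp (-t)) ^ n : ℝ) : ℂ)) (z - 1) := by
  have hsupp : ∀ k ∉ range (n + 1), (-1 : ℂ) ^ k * (n.choose k : ℂ) = 0 := fun k hk => by
    rw [Nat.choose_eq_zero_of_lt (by simpa using hk), Nat.cast_zero, mul_zero]
  have h := hasSum_mellin (a := fun k : ℕ => (-1 : ℂ) ^ k * (n.choose k : ℂ))
    (p := fun k => k + u) (s := z - 1)
    (F := fun t => ((Real.exp (-u * t) * (1 - Real.exp (-t)) ^ n : ℝ) : ℂ))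
    (fun k => Or.inr (by positivity)) (by rw [Complex.sub_re, Complex.one_re]; linarith)
    (fun t _ => by
      rw [exp_mul_one_sub_exp_pow_eq_sum]
      push_cast
      exact hasSum_sum_of_ne_finset_zero fun k hk => by simp [hsupp k hk])
    (summable_of_ne_finset_zero (s := range (n + 1)) fun k hk => by simp [hsupp k hk])
  rw [h.unique (hasSum_sum_of_ne_finset_zero (s := range (n + 1)) fun k hk => by
    simp [hsupp k hk]), altBinomSum, mul_sum]
  refine sum_congr rfl fun k _ => ?_
  rw [show 1 - z = -(z - 1) by ring, Complex.cpow_neg]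
  push_cast
  ring

lemma norm_altBinomSum_le (hu : 0 < u) {z : ℂ} (hz : 1 < z.re) (n : ℕ) :
    ‖altBinomSum u z n‖ ≤ expBinomIntegral u (z.re - 2) n / ‖Complex.Gamma (z - 1)‖ := by
  have hΓ : 0 < ‖Complex.Gamma (z - 1)‖ :=
    norm_pos_iff.mpr
      (Complex.Gamma_ne_zero_of_re_pos (by rw [Complex.sub_re, Complex.one_re]; linarith))
  rw [le_div_iff₀ hΓ, mul_comm, ← norm_mul, Gamma_mul_altBinomSum hu hz, mellin]
  refine (norm_integral_le_integral_norm _).trans_eq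
    (setIntegral_congr_fun measurableSet_Ioi fun t (ht : 0 < t) => ?_)
  have := one_sub_exp_neg_nonneg ht.le
  rw [norm_smul, Complex.norm_cpow_eq_rpow_re_of_pos ht, Complex.norm_real,
    Real.norm_of_nonneg (by positivity)]
  simp only [Complex.sub_re, Complex.one_re]
  ring_nf

lemma tendsto_altBinomSum_atTop (hu : 0 < u) {z : ℂ} (hz : 1 < z.re) :
    Tendsto (altBinomSum u z) atTop (𝓝 0) :=
  squeeze_zero_norm (norm_altBinomSum_le hu hz) <| by
    simpa using (tendsto_expBinomIntegral_atTop (by linarith) hu).div_const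
      ‖Complex.Gamma (z - 1)‖

lemma norm_inv_natCast_add_le {c : ℝ} (hc : 0 < c) (n : ℕ) :
    ‖((n : ℂ) + c)⁻¹‖ ≤ (1 + c⁻¹) / (n + 1) := by
  rw [show (n : ℂ) + c = ((n + c : ℝ) : ℂ) by push_cast; ring, norm_inv, Complex.norm_real,
    Real.norm_of_nonneg (by positivity), inv_eq_one_div,
    div_le_div_iff₀ (by positivity) (by positivity)]
  have : 0 ≤ c⁻¹ * n := by positivity
  have : c⁻¹ * c = 1 := inv_mul_cancel₀ hc.ne'
  nlinarith

lemma summable_inv_natCast_add_mul_altBinomSum (hu : 0 < u) {z : ℂ} (hz : 1 < z.re) {c : ℝ}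
    (hc : 0 < c) : Summable fun n : ℕ => ((n : ℂ) + c)⁻¹ * altBinomSum u z n := by
  refine Summable.of_norm_bounded
    (((summable_expBinomIntegral_div_succ (p := z.re - 2) (by linarith) hu).mul_left
      ((1 + c⁻¹) / ‖Complex.Gamma (z - 1)‖))) fun n => ?_
  rw [norm_mul]
  calc ‖((n : ℂ) + c)⁻¹‖ * ‖altBinomSum u z n‖
      ≤ (1 + c⁻¹) / (n + 1) * (expBinomIntegral u (z.re - 2) n / ‖Complex.Gamma (z - 1)‖) :=
        mul_le_mul (norm_inv_natCast_add_le hc n) (norm_altBinomSum_le hu hz n) (norm_nonneg _)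
          (by positivity)
    _ = _ := by ring

lemma natCast_add_cpow_one_sub_sub_one (hu : 0 < u) (z : ℂ) (k : ℕ) :
    ((k + u : ℝ) : ℂ) ^ (1 - (z - 1)) = ((k + u : ℝ) : ℂ) * ((k + u : ℝ) : ℂ) ^ (1 - z) := by
  have : ((k + u : ℝ) : ℂ) ≠ 0 := Complex.ofReal_ne_zero.mpr (by positivity)
  rw [show 1 - (z - 1) = 1 + (1 - z) by ring, Complex.cpow_add _ _ this, Complex.cpow_one]

lemma natCast_mul_altBinomSum (z : ℂ) (n : ℕ) :
    (n + 1 : ℂ) * altBinomSum u z n = ∑ k ∈ range (n + 2),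
      (-1 : ℂ) ^ k * ((n + 1).choose k : ℂ) * ((n + 1 : ℂ) - k) * ((k + u : ℝ) : ℂ) ^ (1 - z) := by
  rw [sum_range_succ, altBinomSum, mul_sum]
  push_cast
  rw [sub_self, mul_zero, zero_mul, add_zero]
  refine sum_congr rfl fun k hk => ?_
  have h := Nat.choose_mul_succ_eq n k
  rw [← Nat.cast_inj (R := ℂ), Nat.cast_mul, Nat.cast_mul,
    Nat.cast_sub (mem_range.mp hk).le] at h
  push_cast at h
  linear_combination ((-1 : ℂ) ^ k * ((k : ℂ) + u) ^ (1 - z)) * h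

lemma altBinomSum_sub_one (hu : 0 < u) (z : ℂ) (n : ℕ) :
    altBinomSum u (z - 1) n = (n + u) * altBinomSum u z n - n * altBinomSum u z (n - 1) := by
  cases n with
  | zero =>
    simpa [altBinomSum] using natCast_add_cpow_one_sub_sub_one hu z 0
  | succ n =>
    rw [Nat.add_sub_cancel, Nat.cast_succ, natCast_mul_altBinomSum, altBinomSum, altBinomSum,
      mul_sum, ← sum_sub_distrib]
    refine sum_congr rfl fun k _ => ?_
    rw [natCast_add_cpow_one_sub_sub_one hu]
    push_cast
    ring

-- `n - 1` is truncated at `n = 0`, where the factor `n` vanishes.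
lemma inv_add_mul_altBinomSum_combination_eq_sub (hu : 0 < u) {α : ℝ} (hα : 0 < α) (z : ℂ)
    (n : ℕ) :
    ((n : ℂ) + α)⁻¹ * altBinomSum u (z - 1) n + (α - u) * (((n : ℂ) + α)⁻¹ * altBinomSum u z n)
        - α * (((n : ℂ) + (α + 1 : ℝ))⁻¹ * altBinomSum u z n) =
      ((n + 1 : ℕ) : ℂ) / ((n + 1 : ℕ) + α) * altBinomSum u z n
        - n / (n + α) * altBinomSum u z (n - 1) := by
  have h₁ : (n : ℂ) + α ≠ 0 := by exact_mod_cast (by positivity : (n : ℝ) + α ≠ 0)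
  have h₂ : (n : ℂ) + 1 + α ≠ 0 := by exact_mod_cast (by positivity : (n : ℝ) + 1 + α ≠ 0)
  rw [altBinomSum_sub_one hu]
  push_cast
  rw [show (n : ℂ) + (α + 1) = n + 1 + α by ring]
  field_simp
  ring

end AltBinomSum

lemma Salpha_eq_tsum (α : ℝ) (s : ℂ) (u : ℝ) :
    Salpha α s u = ∑' n : ℕ, ((n : ℂ) + (α + 1 : ℝ))⁻¹ * altBinomSum u s n := by
  simp only [Salpha, altBinomSum, one_div, Complex.ofReal_add, Complex.ofReal_one, add_assoc]

lemma hasSum_sub_of_tendsto {G : Type*} [AddCommGroup G] [TopologicalSpace G]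
    [IsTopologicalAddGroup G] [T2Space G] {B : ℕ → G} {l : G}
    (hsum : Summable fun n => B (n + 1) - B n)
    (hB : Tendsto B atTop (𝓝 l)) : HasSum (fun n => B (n + 1) - B n) (l - B 0) := by
  rw [hsum.hasSum_iff_tendsto_nat]
  simpa only [sum_range_sub] using hB.sub_const (B 0)

theorem stmt_3 (u : ℝ) (hu : 0 < u) (s : ℂ) (hs : 2 < s.re) (α : ℝ) (hα : 0 < α) :
    (α : ℂ) * Salpha α s u =
      Salpha (α - 1) (s - 1) u + ((α : ℂ) - (u : ℂ)) * Salpha (α - 1) s u := by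
  have hs₁ : 1 < s.re := by linarith
  have hs₂ : 1 < (s - 1).re := by rw [Complex.sub_re, Complex.one_re]; linarith
  set B : ℕ → ℂ := fun n => n / (n + α) * altBinomSum u s (n - 1)
  have hB : Tendsto B atTop (𝓝 0) := by
    simpa using (tendsto_natCast_div_add_atTop (α : ℂ)).mul
      ((tendsto_altBinomSum_atTop hu hs₁).comp (tendsto_sub_atTop_nat 1))
  have h₁ := summable_inv_natCast_add_mul_altBinomSum hu hs₂ hα
  have h₂ := summable_inv_natCast_add_mul_altBinomSum hu hs₁ hα
  have h₃ := summable_inv_natCast_add_mul_altBinomSum hu hs₁ (by linarith : 0 < α + 1)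
  have hD : HasSum (fun n => B (n + 1) - B n) _ :=
    ((h₁.hasSum.add (h₂.hasSum.mul_left ((α : ℂ) - u))).sub (h₃.hasSum.mul_left (α : ℂ))).congr_fun
      fun n => (inv_add_mul_altBinomSum_combination_eq_sub hu hα s n).symm
  have hsum := hD.unique (hasSum_sub_of_tendsto hD.summable hB)
  rw [show B 0 = 0 by simp [B], sub_zero] at hsum
  rw [Salpha_eq_tsum, Salpha_eq_tsum, Salpha_eq_tsum, sub_add_cancel]
  linear_combination -hsum
end

section
/- For real u > 0 and integer d ≥ 0, ∑_{n=1}^∞ (1/(n+d)) ∑_{k=0}^n (-1)^{k+1} C(n,k) log(k+u) = ∫_0^1 x^{u-1} ( 1/(1-x)^d + (1/log x) ∑_{m=1}^d 1/(m (1-x)^{d-m}) ) dx. -/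
/-!
Frullani's integral `∫₀¹ (x^(u-1) - x^(v-1)) / (-log x) dx = log v - log u` (Fubini for
`x^(t-1)` on `(0,1) × (u,v)`), the binomial expansion of `(1-x)^N` and `∑ₖ (-1)^k C(N,k) = 0`
give `∫₀¹ x^(u-1) (1-x)^N / (-log x) dx = ∑ₖ (-1)^(k+1) C(N,k) log(k+u)`. Hence the `n`-th term of
the series is the integral of a nonnegative function, and summing these functions pointwise with
the tail `∑_{n>d} tⁿ/n = -log(1-t) - ∑_{m ≤ d} tᵐ/m` at `t = 1 - x` gives the integrand on the
right. That sum is at most its value `x^(u-1)` for `d = 0`, so the series may be integrated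
termwise.
-/

open MeasureTheory Real Set Finset intervalIntegral
open scoped Interval

theorem ae_mem_Ioo_of_mem_uIoc {μ : Measure ℝ} [NullSingletonClass μ] {a b : ℝ} (hab : a ≤ b) :
    ∀ᵐ x ∂μ, x ∈ Ι a b → x ∈ Ioo a b := by
  filter_upwards [Measure.ae_ne μ b] with x hxb hx
  rw [uIoc_of_le hab] at hx
  exact ⟨hx.1, lt_of_le_of_ne hx.2 hxb⟩

theorem intervalIntegral.hasSum_integral_of_nonneg {μ : Measure ℝ} {a b : ℝ}
    {F : ℕ → ℝ → ℝ} {f : ℝ → ℝ} (hF_meas : ∀ n, AEStronglyMeasurable (F n) (μ.restrict (Ι a b)))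
    (hF_nonneg : ∀ n, ∀ᵐ x ∂μ, x ∈ Ι a b → 0 ≤ F n x) (hf : IntervalIntegrable f μ a b)
    (h_lim : ∀ᵐ x ∂μ, x ∈ Ι a b → HasSum (fun n => F n x) (f x)) :
    HasSum (fun n => ∫ x in a..b, F n x ∂μ) (∫ x in a..b, f x ∂μ) := by
  refine hasSum_integral_of_dominated_convergence F hF_meas ?_ ?_ ?_ h_lim
  · intro n
    filter_upwards [hF_nonneg n] with x hx hxab
    exact (norm_of_nonneg (hx hxab)).le
  · filter_upwards [h_lim] with x hx hxab
    exact (hx hxab).summable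
  · refine hf.congr_ae ((ae_restrict_iff' measurableSet_uIoc).2 ?_)
    filter_upwards [h_lim] with x hx hxab
    exact (hx hxab).tsum_eq.symm

theorem Finset.sum_range_neg_one_pow_mul_choose_mul_add {R : Type*} [CommRing R] {N : ℕ}
    (hN : N ≠ 0) (f : ℕ → R) (c : R) :
    ∑ k ∈ range (N + 1), (-1) ^ k * (N.choose k : R) * (f k + c) =
      ∑ k ∈ range (N + 1), (-1) ^ k * (N.choose k : R) * f k := by
  have h : ∑ k ∈ range (N + 1), (-1) ^ k * (N.choose k : R) = 0 := by
    exact_mod_cast congrArg (Int.cast : ℤ → R) (Int.alternating_sum_range_choose_of_ne hN)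
  simp only [mul_add, sum_add_distrib, ← sum_mul, h, zero_mul, add_zero]

theorem one_sub_pow_eq_sum {R : Type*} [CommRing R] (x : R) (N : ℕ) :
    (1 - x) ^ N = ∑ k ∈ range (N + 1), (-1) ^ k * (N.choose k : R) * x ^ k := by
  rw [sub_eq_neg_add, add_pow]
  refine sum_congr rfl fun k _ => ?_
  rw [neg_pow]
  ring

theorem integral_const_rpow {x : ℝ} (hx0 : 0 < x) (hx1 : x ≠ 1) (a b : ℝ) :
    ∫ t in a..b, x ^ t = (x ^ b - x ^ a) / log x := by
  have hlog : log x ≠ 0 := log_ne_zero_of_pos_of_ne_one hx0 hx1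
  have hderiv (t : ℝ) : HasDerivAt (fun t => x ^ t / log x) (x ^ t) t := by
    simpa [hlog] using ((hasStrictDerivAt_const_rpow hx0 t).hasDerivAt).div_const (log x)
  rw [integral_eq_sub_of_hasDerivAt (fun t _ => hderiv t)
    ((continuous_const.rpow continuous_id fun _ => Or.inl hx0.ne').intervalIntegrable _ _)]
  ring

theorem rpow_sub_rpow_div_neg_log_eq_integral {x : ℝ} (hx0 : 0 < x) (hx1 : x ≠ 1) (u v : ℝ) :
    (x ^ (u - 1) - x ^ (v - 1)) / -log x = ∫ t in u..v, x ^ (t - 1) := by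
  rw [integral_comp_sub_right (fun t => x ^ t), integral_const_rpow hx0 hx1, div_neg, ← neg_div,
    neg_sub]

section Frullani

variable {u v : ℝ}

theorem integrable_rpow_sub_one_prod (hu : 0 < u) :
    Integrable (fun p : ℝ × ℝ => p.1 ^ (p.2 - 1))
      ((volume.restrict (Ioc 0 1)).prod (volume.restrict (Ioc u v))) := by
  have hdom : Integrable (fun p : ℝ × ℝ => p.1 ^ (u - 1) * 1)
      ((volume.restrict (Ioc 0 1)).prod (volume.restrict (Ioc u v))) :=
    ((intervalIntegrable_rpow' (by linarith)).1).mul_prod (integrable_const 1)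
  refine hdom.mono' (measurable_fst.pow (measurable_snd.sub_const 1)).aestronglyMeasurable ?_
  rw [Measure.prod_restrict, ae_restrict_iff' (measurableSet_Ioc.prod measurableSet_Ioc)]
  refine ae_of_all _ fun p ⟨⟨hx0, hx1⟩, ht, _⟩ => ?_
  rw [norm_of_nonneg (rpow_nonneg hx0.le _), mul_one]
  exact rpow_le_rpow_of_exponent_ge hx0 hx1 (by linarith)

theorem intervalIntegrable_rpow_sub_rpow_div_neg_log (hu : 0 < u) (huv : u ≤ v) :
    IntervalIntegrable (fun x => (x ^ (u - 1) - x ^ (v - 1)) / -log x) volume 0 1 := by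
  have h := (integrable_rpow_sub_one_prod (v := v) hu).integral_prod_left
  refine (intervalIntegrable_iff_integrableOn_Ioc_of_le zero_le_one).2 (h.congr ?_)
  rw [← uIoc_of_le zero_le_one]
  refine (ae_restrict_iff' measurableSet_uIoc).2 ?_
  filter_upwards [ae_mem_Ioo_of_mem_uIoc zero_le_one] with x hx hx01
  obtain ⟨hx0, hx1⟩ := hx hx01
  rw [rpow_sub_rpow_div_neg_log_eq_integral hx0 hx1.ne u v, integral_of_le huv]

theorem integral_rpow_sub_rpow_div_neg_log (hu : 0 < u) (huv : u ≤ v) :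
    ∫ x in (0 : ℝ)..1, (x ^ (u - 1) - x ^ (v - 1)) / -log x = log v - log u := by
  have hv : 0 < v := hu.trans_le huv
  calc ∫ x in (0 : ℝ)..1, (x ^ (u - 1) - x ^ (v - 1)) / -log x
      = ∫ x in Ioc 0 1, ∫ t in Ioc u v, x ^ (t - 1) := by
        rw [integral_of_le zero_le_one]
        refine setIntegral_congr_ae measurableSet_Ioc ?_
        filter_upwards [ae_mem_Ioo_of_mem_uIoc zero_le_one] with x hx hx01
        obtain ⟨hx0, hx1⟩ := hx (by rwa [uIoc_of_le zero_le_one])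
        rw [rpow_sub_rpow_div_neg_log_eq_integral hx0 hx1.ne u v, integral_of_le huv]
    _ = ∫ t in Ioc u v, ∫ x in Ioc 0 1, x ^ (t - 1) :=
        integral_integral_swap (integrable_rpow_sub_one_prod hu)
    _ = ∫ t in Ioc u v, 1 / t := by
        refine setIntegral_congr_fun measurableSet_Ioc fun t ht => ?_
        have ht0 : 0 < t := hu.trans ht.1
        rw [← integral_of_le zero_le_one, integral_rpow (Or.inl (by linarith)),
          sub_add_cancel, one_rpow, zero_rpow ht0.ne']
        ring
    _ = log v - log u := by
        rw [← integral_of_le huv, integral_one_div_of_pos hu hv, log_div hv.ne' hu.ne']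

end Frullani

theorem integral_rpow_mul_one_sub_pow_div_neg_log {u : ℝ} (hu : 0 < u) {N : ℕ} (hN : N ≠ 0) :
    ∫ x in (0 : ℝ)..1, x ^ (u - 1) * (1 - x) ^ N / -log x =
      ∑ k ∈ range (N + 1), (-1) ^ (k + 1) * (N.choose k : ℝ) * log (k + u) := by
  have hpoint : ∀ x : ℝ, 0 < x → x ^ (u - 1) * (1 - x) ^ N / -log x =
      ∑ k ∈ range (N + 1), (-1) ^ (k + 1) * (N.choose k : ℝ) *
        ((x ^ (u - 1) - x ^ ((k + u) - 1)) / -log x) := by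
    intro x hx
    have hpow (k : ℕ) : x ^ ((k + u) - 1) = x ^ k * x ^ (u - 1) := by
      rw [add_sub_assoc, rpow_add hx, rpow_natCast]
    calc x ^ (u - 1) * (1 - x) ^ N / -log x
        = ∑ k ∈ range (N + 1), (-1) ^ k * (N.choose k : ℝ) * (x ^ ((k + u) - 1) / -log x) := by
          simp only [one_sub_pow_eq_sum, hpow, mul_sum, sum_div]
          exact sum_congr rfl fun k _ => by ring
      _ = ∑ k ∈ range (N + 1), (-1) ^ k * (N.choose k : ℝ) *
            (x ^ ((k + u) - 1) / -log x + -(x ^ (u - 1) / -log x)) :=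
          (sum_range_neg_one_pow_mul_choose_mul_add hN _ _).symm
      _ = _ := sum_congr rfl fun k _ => by ring
  have hle (k : ℕ) : u ≤ k + u := le_add_of_nonneg_left k.cast_nonneg
  have hfrullani (k : ℕ) :
      ∫ x in (0 : ℝ)..1, (x ^ (u - 1) - x ^ ((k + u) - 1)) / -log x = log (k + u) + -log u :=
    (integral_rpow_sub_rpow_div_neg_log hu (hle k)).trans (sub_eq_add_neg _ _)
  rw [integral_congr_ae (ae_of_all _ fun x hx => hpoint x (by
      rw [uIoc_of_le zero_le_one] at hx; exact hx.1)),
    integral_finsetSum fun k _ =>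
      (intervalIntegrable_rpow_sub_rpow_div_neg_log hu (hle k)).const_mul _]
  simp only [intervalIntegral.integral_const_mul, hfrullani]
  simp only [pow_succ, mul_neg_one, neg_mul, sum_neg_distrib,
    sum_range_neg_one_pow_mul_choose_mul_add hN]

theorem hasSum_pow_div_add {t : ℝ} (ht : |t| < 1) (d : ℕ) :
    HasSum (fun n : ℕ => t ^ (n + 1 + d) / ((n : ℝ) + 1 + d))
      (-log (1 - t) - ∑ m ∈ Icc 1 d, t ^ m / m) := by
  have h := (hasSum_nat_add_iff' d).2 (Real.hasSum_pow_div_log_of_abs_lt_one ht)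
  have hrange : ∑ i ∈ range d, t ^ (i + 1) / ((i : ℝ) + 1) = ∑ m ∈ Icc 1 d, t ^ m / m := by
    rw [← Finset.Ico_add_one_right_eq_Icc, sum_Ico_eq_sum_range, Nat.add_sub_cancel]
    refine sum_congr rfl fun i _ => ?_
    push_cast
    ring_nf
  rw [← hrange]
  have hshift : (fun n : ℕ => t ^ (n + 1 + d) / ((n : ℝ) + 1 + d)) =
      fun n => t ^ (n + d + 1) / (((n + d : ℕ) : ℝ) + 1) := by
    ext n
    rw [show n + 1 + d = n + d + 1 by ring]
    push_cast
    ring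
  rwa [hshift]

theorem hasSum_rpow_mul_one_sub_pow_div_neg_log (u : ℝ) (d : ℕ) {x : ℝ} (hx0 : 0 < x)
    (hx1 : x < 1) :
    HasSum (fun n : ℕ => 1 / ((n : ℝ) + 1 + d) * (x ^ (u - 1) * (1 - x) ^ (n + 1) / -log x))
      (x ^ (u - 1) * (1 / (1 - x) ^ d +
        1 / log x * ∑ m ∈ Icc 1 d, 1 / ((m : ℝ) * (1 - x) ^ (d - m)))) := by
  have ht0 : 0 < 1 - x := by linarith
  have hlog : log x ≠ 0 := (log_neg hx0 hx1).ne
  have hsum : ∑ m ∈ Icc 1 d, 1 / ((m : ℝ) * (1 - x) ^ (d - m)) =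
      (∑ m ∈ Icc 1 d, (1 - x) ^ m / m) / (1 - x) ^ d := by
    rw [sum_div]
    refine sum_congr rfl fun m hm => ?_
    have hm0 : (0 : ℝ) < m := by exact_mod_cast (mem_Icc.1 hm).1
    rw [pow_sub₀ _ ht0.ne' (mem_Icc.1 hm).2]
    field_simp
  have h := (hasSum_pow_div_add (t := 1 - x) (by rw [abs_of_pos ht0]; linarith) d).mul_left
    (x ^ (u - 1) / (-log x * (1 - x) ^ d))
  rw [sub_sub_cancel] at h
  have hterm :
      (fun n : ℕ => 1 / ((n : ℝ) + 1 + d) * (x ^ (u - 1) * (1 - x) ^ (n + 1) / -log x)) =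
        fun n => x ^ (u - 1) / (-log x * (1 - x) ^ d) *
          ((1 - x) ^ (n + 1 + d) / ((n : ℝ) + 1 + d)) := by
    ext n
    field_simp
    ring
  have hval : x ^ (u - 1) * (1 / (1 - x) ^ d +
      1 / log x * ((∑ m ∈ Icc 1 d, (1 - x) ^ m / m) / (1 - x) ^ d)) =
      x ^ (u - 1) / (-log x * (1 - x) ^ d) * (-log x - ∑ m ∈ Icc 1 d, (1 - x) ^ m / m) := by
    field_simp
    ring
  rwa [hterm, hsum, hval]

theorem rpow_mul_one_sub_pow_div_neg_log_nonneg (u : ℝ) (N : ℕ) {x : ℝ} (hx0 : 0 < x)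
    (hx1 : x ≤ 1) : 0 ≤ x ^ (u - 1) * (1 - x) ^ N / -log x :=
  div_nonneg (mul_nonneg (rpow_nonneg hx0.le _) (pow_nonneg (by linarith) _))
    (neg_nonneg.2 (log_nonpos hx0.le hx1))

theorem intervalIntegrable_rpow_mul_one_div_one_sub_pow_add {u : ℝ} (hu : 0 < u) (d : ℕ) :
    IntervalIntegrable (fun x => x ^ (u - 1) * (1 / (1 - x) ^ d +
      1 / log x * ∑ m ∈ Icc 1 d, 1 / ((m : ℝ) * (1 - x) ^ (d - m)))) volume 0 1 := by
  refine (intervalIntegrable_rpow' (r := u - 1) (by linarith)).mono_fun'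
    (by apply Measurable.aestronglyMeasurable; fun_prop)
    ((ae_restrict_iff' measurableSet_uIoc).2 ?_)
  filter_upwards [ae_mem_Ioo_of_mem_uIoc zero_le_one] with x hx hx01
  obtain ⟨hx0, hx1⟩ := hx hx01
  have hsum := hasSum_rpow_mul_one_sub_pow_div_neg_log u d hx0 hx1
  have hsum₀ := hasSum_rpow_mul_one_sub_pow_div_neg_log u 0 hx0 hx1
  rw [Finset.Icc_eq_empty_of_lt (zero_lt_one' ℕ)] at hsum₀
  simp only [sum_empty, mul_zero, add_zero, pow_zero, div_one, mul_one] at hsum₀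
  rw [norm_of_nonneg (hsum.nonneg fun n => mul_nonneg (by positivity)
    (rpow_mul_one_sub_pow_div_neg_log_nonneg u _ hx0 hx1.le))]
  refine hasSum_le (fun n => ?_) hsum hsum₀
  exact mul_le_mul_of_nonneg_right (one_div_le_one_div_of_le (by positivity) (by simp))
    (rpow_mul_one_sub_pow_div_neg_log_nonneg u _ hx0 hx1.le)

theorem stmt_18 (u : ℝ) (hu : 0 < u) (d : ℕ) :
    HasSum (fun n : ℕ => (1 / ((n : ℝ) + 1 + d)) * ∑ k ∈ Finset.range (n + 2),
        (-1 : ℝ) ^ (k + 1) * ((n + 1).choose k : ℝ) * Real.log (k + u))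
      (∫ x in (0 : ℝ)..1, x ^ (u - 1) * (1 / (1 - x) ^ d +
        (1 / Real.log x) * ∑ m ∈ Finset.Icc 1 d, 1 / ((m : ℝ) * (1 - x) ^ (d - m)))) := by
  have hterm (n : ℕ) : ∫ x in (0 : ℝ)..1, 1 / ((n : ℝ) + 1 + d) *
      (x ^ (u - 1) * (1 - x) ^ (n + 1) / -log x) = 1 / ((n : ℝ) + 1 + d) *
        ∑ k ∈ range (n + 2), (-1) ^ (k + 1) * ((n + 1).choose k : ℝ) * log (k + u) := by
    rw [intervalIntegral.integral_const_mul,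
      integral_rpow_mul_one_sub_pow_div_neg_log hu n.succ_ne_zero]
  rw [← funext hterm]
  refine hasSum_integral_of_nonneg
    (fun n => by apply Measurable.aestronglyMeasurable; fun_prop) (fun n => ?_)
    (intervalIntegrable_rpow_mul_one_div_one_sub_pow_add hu d) ?_
  · refine ae_of_all _ fun x hx => ?_
    rw [uIoc_of_le zero_le_one] at hx
    exact mul_nonneg (by positivity) (rpow_mul_one_sub_pow_div_neg_log_nonneg u _ hx.1 hx.2)
  · filter_upwards [ae_mem_Ioo_of_mem_uIoc zero_le_one] with x hx hx01
    exact hasSum_rpow_mul_one_sub_pow_div_neg_log u d (hx hx01).1 (hx hx01).2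
end
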